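/- For the two-armed Dirichlet bandit value function W with finitely supported priors, if 0 < M < M̃ and F is a finitely supported probability distribution on ℝ, then W(M·F, α₂; A_n) ≥ W(M̃·F, α₂; A_n). -/

import Mathlib

/-- Total mass of a finitely supported (signed) measure on ℝ. -/
noncomputable def fmass (α : ℝ →₀ ℝ) : ℝ := α.sum fun _ w => w

/-- Mean of the normalized measure α / α(ℝ). -/
noncomputable def fmean (α : ℝ →₀ ℝ) : ℝ := (α.sum fun x w => w * x) / fmass α

/-- Value function of the two-armed Dirichlet bandit with finitely supported priors,
defined by backward induction on the discount sequence.  Pulling arm i with prior αᵢ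
yields an observation X distributed as αᵢ/αᵢ(ℝ) and updates the prior to αᵢ + δ_X. -/
noncomputable def bW : (ℝ →₀ ℝ) → (ℝ →₀ ℝ) → List ℝ → ℝ
  | _, _, [] => 0
  | α₁, α₂, a :: as =>
      max (a * fmean α₁ +
            (α₁.sum fun x w => w * bW (α₁ + Finsupp.single x 1) α₂ as) / fmass α₁)
          (a * fmean α₂ +
            (α₂.sum fun y w => w * bW α₁ (α₂ + Finsupp.single y 1) as) / fmass α₂)

lemma fmass_add (α β : ℝ →₀ ℝ) : fmass (α + β) = fmass α + fmass β := by
  unfold fmass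
  exact Finsupp.sum_add_index' (fun _ => rfl) (fun _ _ _ => rfl)

lemma fmass_single (x c : ℝ) : fmass (Finsupp.single x c) = c := by
  unfold fmass; exact Finsupp.sum_single_index rfl

lemma fmass_smul (c : ℝ) (α : ℝ →₀ ℝ) : fmass (c • α) = c * fmass α := by
  unfold fmass
  rw [Finsupp.sum_smul_index (fun _ => rfl), Finsupp.mul_sum]

lemma fmass_nonneg (α : ℝ →₀ ℝ) (h : ∀ x, 0 ≤ α x) : 0 ≤ fmass α :=
  Finset.sum_nonneg fun i _ => h i

-- generic weighted sums
lemma sumg_add (α β : ℝ →₀ ℝ) (g : ℝ → ℝ) :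
    (α + β).sum (fun z w => w * g z) = α.sum (fun z w => w * g z) + β.sum (fun z w => w * g z) :=
  Finsupp.sum_add_index' (fun z => zero_mul (g z)) (fun z w₁ w₂ => add_mul w₁ w₂ (g z))

lemma sumg_single (x c : ℝ) (g : ℝ → ℝ) :
    (Finsupp.single x c).sum (fun z w => w * g z) = c * g x :=
  Finsupp.sum_single_index (zero_mul (g x))

lemma sumg_smul (c : ℝ) (α : ℝ →₀ ℝ) (g : ℝ → ℝ) :
    (c • α).sum (fun z w => w * g z) = c * α.sum (fun z w => w * g z) := by
  rw [Finsupp.sum_smul_index (fun z => zero_mul (g z)), Finsupp.mul_sum]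
  exact Finset.sum_congr rfl fun z _ => by ring

lemma sumg_le (α : ℝ →₀ ℝ) (h : ∀ x, 0 ≤ α x) (g h' : ℝ → ℝ)
    (hle : ∀ z ∈ α.support, g z ≤ h' z) :
    α.sum (fun z w => w * g z) ≤ α.sum (fun z w => w * h' z) :=
  Finset.sum_le_sum fun z hz => mul_le_mul_of_nonneg_left (hle z hz) (h z)

lemma sumg_linear (α : ℝ →₀ ℝ) (c d : ℝ) (g h : ℝ → ℝ) :
    α.sum (fun z w => w * (c * g z + d * h z))
      = c * α.sum (fun z w => w * g z) + d * α.sum (fun z w => w * h z) := by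
  unfold Finsupp.sum
  rw [Finset.mul_sum, Finset.mul_sum, ← Finset.sum_add_distrib]
  exact Finset.sum_congr rfl fun z _ => by ring

lemma sumg_const (α : ℝ →₀ ℝ) (K : ℝ) :
    α.sum (fun _ w => w * K) = fmass α * K := by
  unfold fmass Finsupp.sum
  rw [Finset.sum_mul]

lemma sumg_swap (α ν : ℝ →₀ ℝ) (X : ℝ → ℝ → ℝ) :
    α.sum (fun z w => w * ν.sum (fun i u => u * X z i))
      = ν.sum (fun i u => u * α.sum (fun z w => w * X z i)) := by
  unfold Finsupp.sum
  simp only [Finset.mul_sum]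
  rw [Finset.sum_comm]
  exact Finset.sum_congr rfl fun i _ => Finset.sum_congr rfl fun z _ => by ring


noncomputable def wsum (α : ℝ →₀ ℝ) : ℝ := α.sum fun x w => w * x

lemma wsum_add (α β : ℝ →₀ ℝ) : wsum (α + β) = wsum α + wsum β := sumg_add α β id
lemma wsum_single (x c : ℝ) : wsum (Finsupp.single x c) = c * x := sumg_single x c id
lemma wsum_smul (c : ℝ) (α : ℝ →₀ ℝ) : wsum (c • α) = c * wsum α := sumg_smul c α id
lemma fmean_eq (α : ℝ →₀ ℝ) : fmean α = wsum α / fmass α := rfl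

lemma apply_add_single_nonneg {α : ℝ →₀ ℝ} (hα : ∀ u, 0 ≤ α u) {c : ℝ} (hc : 0 ≤ c) (x : ℝ) :
    ∀ u, 0 ≤ (α + Finsupp.single x c) u := by
  intro u
  rw [Finsupp.add_apply, Finsupp.single_apply]
  have : (0:ℝ) ≤ (if x = u then c else 0) := by split <;> simp [hc]
  linarith [hα u]

lemma fmass_upd (α₂ : ℝ →₀ ℝ) (u : ℝ) :
    fmass (α₂ + Finsupp.single u 1) = fmass α₂ + 1 := by
  rw [fmass_add, fmass_single]

/-- Two-point convexity: value at a two-atom split is below the convex combination of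
the merged states. -/
lemma bW_two_point (A : List ℝ) : ∀ (α α₂ : ℝ →₀ ℝ) (x y l1 l2 : ℝ),
    (∀ z, 0 ≤ α z) → 0 ≤ l1 → 0 ≤ l2 → 0 < l1 + l2 →
    (∀ z, 0 ≤ α₂ z) → 0 < fmass α₂ →
    bW (α + Finsupp.single x l1 + Finsupp.single y l2) α₂ A
      ≤ (l1/(l1+l2)) * bW (α + Finsupp.single x (l1+l2)) α₂ A
        + (l2/(l1+l2)) * bW (α + Finsupp.single y (l1+l2)) α₂ A := by
  induction A with
  | nil =>
      intro α α₂ x y l1 l2 hα h1 h2 hL hα₂ hm₂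
      rw [bW, bW, bW]; simp
  | cons a as IH =>
      intro α α₂ x y l1 l2 hα h1 h2 hL hα₂ hm₂
      set L := l1 + l2 with hLdef
      have hLne : L ≠ 0 := ne_of_gt hL
      have hL1 : (0:ℝ) < L + 1 := by linarith
      set B := α + Finsupp.single x l1 + Finsupp.single y l2 with hBdef
      set Cx := α + Finsupp.single x L with hCxdef
      set Cy := α + Finsupp.single y L with hCydef
      have hM := fmass_nonneg α hα
      set M := fmass α with hMdef
      have hmB : fmass B = M + L := by
        rw [hBdef, fmass_add, fmass_add, fmass_single, fmass_single]; ring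
      have hmCx : fmass Cx = M + L := by rw [hCxdef, fmass_add, fmass_single]
      have hmCy : fmass Cy = M + L := by rw [hCydef, fmass_add, fmass_single]
      have hML : (0:ℝ) < M + L := by linarith
      -- continuation functions
      set G : ℝ → ℝ := fun z => bW (B + Finsupp.single z 1) α₂ as with hG
      set Gx : ℝ → ℝ := fun z => bW (Cx + Finsupp.single z 1) α₂ as with hGx
      set Gy : ℝ → ℝ := fun z => bW (Cy + Finsupp.single z 1) α₂ as with hGy
      set P : ℝ := bW (α + Finsupp.single x (L+1)) α₂ as with hP
      set Q : ℝ := bW (α + Finsupp.single y (L+1)) α₂ as with hQ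
      -- pointwise bound for z-terms
      have hz : ∀ z, G z ≤ (l1/L) * Gx z + (l2/L) * Gy z := by
        intro z
        have e1 : B + Finsupp.single z 1
            = (α + Finsupp.single z 1) + Finsupp.single x l1 + Finsupp.single y l2 := by
          rw [hBdef]; abel
        have e2 : (α + Finsupp.single z 1) + Finsupp.single x L = Cx + Finsupp.single z 1 := by
          rw [hCxdef]; abel
        have e3 : (α + Finsupp.single z 1) + Finsupp.single y L = Cy + Finsupp.single z 1 := by
          rw [hCydef]; abel
        have := IH (α + Finsupp.single z 1) α₂ x y l1 l2
          (apply_add_single_nonneg hα zero_le_one z) h1 h2 hL hα₂ hm₂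
        rw [e2, e3] at this
        simpa [hG, hGx, hGy, e1] using this
      -- cluster bounds
      have hxG : G x ≤ ((l1+1)/(L+1)) * P + (l2/(L+1)) * Q := by
        have e1 : B + Finsupp.single x 1
            = α + Finsupp.single x (l1+1) + Finsupp.single y l2 := by
          rw [hBdef, Finsupp.single_add]; abel
        have := IH α α₂ x y (l1+1) l2 hα (by linarith) h2 (by linarith) hα₂ hm₂
        have e2 : l1 + 1 + l2 = L + 1 := by rw [hLdef]; ring
        rw [e2] at this
        simpa [hG, e1, hP, hQ] using this
      have hyG : G y ≤ (l1/(L+1)) * P + ((l2+1)/(L+1)) * Q := by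
        have e1 : B + Finsupp.single y 1
            = α + Finsupp.single x l1 + Finsupp.single y (l2+1) := by
          rw [hBdef, Finsupp.single_add]; abel
        have := IH α α₂ x y l1 (l2+1) hα h1 (by linarith) (by linarith) hα₂ hm₂
        have e2 : l1 + (l2 + 1) = L + 1 := by rw [hLdef]; ring
        rw [e2] at this
        simpa [hG, e1, hP, hQ] using this
      -- sums
      set Sa : ℝ := α.sum (fun z w => w * G z) with hSa
      set Sx : ℝ := α.sum (fun z w => w * Gx z) with hSx
      set Sy : ℝ := α.sum (fun z w => w * Gy z) with hSy
      have hSplit : B.sum (fun z w => w * G z) = Sa + l1 * G x + l2 * G y := by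
        rw [hBdef] at *
        rw [sumg_add, sumg_add, sumg_single, sumg_single]
      have hSaLe : Sa ≤ (l1/L) * Sx + (l2/L) * Sy := by
        calc Sa ≤ α.sum (fun z w => w * ((l1/L) * Gx z + (l2/L) * Gy z)) :=
              sumg_le α hα _ _ (fun z _ => hz z)
          _ = (l1/L) * Sx + (l2/L) * Sy := sumg_linear α _ _ _ _
      have hSplitx : Cx.sum (fun z w => w * Gx z) = Sx + L * P := by
        have e : Cx + Finsupp.single x 1 = α + Finsupp.single x (L+1) := by
          rw [hCxdef, add_assoc, ← Finsupp.single_add]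
        rw [hCxdef, sumg_add, sumg_single]
        have : Gx x = P := by rw [hGx, hP, ← e]
        rw [this]
      have hSplity : Cy.sum (fun z w => w * Gy z) = Sy + L * Q := by
        have e : Cy + Finsupp.single y 1 = α + Finsupp.single y (L+1) := by
          rw [hCydef, add_assoc, ← Finsupp.single_add]
        rw [hCydef, sumg_add, sumg_single]
        have : Gy y = Q := by rw [hGy, hQ, ← e]
        rw [this]
      -- mean equality
      have hwB : wsum B = wsum α + l1 * x + l2 * y := by
        rw [hBdef, wsum_add, wsum_add, wsum_single, wsum_single]
      have hwCx : wsum Cx = wsum α + L * x := by rw [hCxdef, wsum_add, wsum_single]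
      have hwCy : wsum Cy = wsum α + L * y := by rw [hCydef, wsum_add, wsum_single]
      have hmean : fmean B = (l1/L) * fmean Cx + (l2/L) * fmean Cy := by
        rw [fmean_eq, fmean_eq, fmean_eq, hwB, hwCx, hwCy, hmB, hmCx, hmCy]
        field_simp
        ring
      -- arm 1 comparison
      have hV1 : a * fmean B + (B.sum fun z w => w * bW (B + Finsupp.single z 1) α₂ as) / fmass B
          ≤ (l1/L) * (a * fmean Cx + (Cx.sum fun z w => w * bW (Cx + Finsupp.single z 1) α₂ as) / fmass Cx)
            + (l2/L) * (a * fmean Cy + (Cy.sum fun z w => w * bW (Cy + Finsupp.single z 1) α₂ as) / fmass Cy) := by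
        have eB : (B.sum fun z w => w * bW (B + Finsupp.single z 1) α₂ as)
            = Sa + l1 * G x + l2 * G y := hSplit
        have eCx : (Cx.sum fun z w => w * bW (Cx + Finsupp.single z 1) α₂ as) = Sx + L * P := hSplitx
        have eCy : (Cy.sum fun z w => w * bW (Cy + Finsupp.single z 1) α₂ as) = Sy + L * Q := hSplity
        rw [eB, eCx, eCy, hmB, hmCx, hmCy, hmean]
        have hnum : Sa + l1 * G x + l2 * G y
            ≤ ((l1/L) * (Sx + L * P) + (l2/L) * (Sy + L * Q)) := by
          have hcl : l1 * G x + l2 * G y ≤ l1 * P + l2 * Q := by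
            have b1 : l1 * G x ≤ l1 * (((l1+1)/(L+1)) * P + (l2/(L+1)) * Q) :=
              mul_le_mul_of_nonneg_left hxG h1
            have b2 : l2 * G y ≤ l2 * ((l1/(L+1)) * P + ((l2+1)/(L+1)) * Q) :=
              mul_le_mul_of_nonneg_left hyG h2
            have hid : l1 * (((l1+1)/(L+1)) * P + (l2/(L+1)) * Q)
                + l2 * ((l1/(L+1)) * P + ((l2+1)/(L+1)) * Q) = l1 * P + l2 * Q := by
              rw [hLdef]
              field_simp
              ring
            linarith
          have hid2 : (l1/L) * (Sx + L * P) + (l2/L) * (Sy + L * Q)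
              = (l1/L) * Sx + (l2/L) * Sy + (l1 * P + l2 * Q) := by
            field_simp
            ring
          linarith
        calc a * ((l1/L) * fmean Cx + (l2/L) * fmean Cy) + (Sa + l1 * G x + l2 * G y) / (M + L)
            ≤ a * ((l1/L) * fmean Cx + (l2/L) * fmean Cy)
              + ((l1/L) * (Sx + L * P) + (l2/L) * (Sy + L * Q)) / (M + L) := by
              gcongr
          _ = (l1/L) * (a * fmean Cx + (Sx + L * P) / (M + L))
              + (l2/L) * (a * fmean Cy + (Sy + L * Q) / (M + L)) := by
              field_simp
              ring
      -- arm 2 comparison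
      have hV2 : a * fmean α₂ + (α₂.sum fun u w => w * bW B (α₂ + Finsupp.single u 1) as) / fmass α₂
          ≤ (l1/L) * (a * fmean α₂ + (α₂.sum fun u w => w * bW Cx (α₂ + Finsupp.single u 1) as) / fmass α₂)
            + (l2/L) * (a * fmean α₂ + (α₂.sum fun u w => w * bW Cy (α₂ + Finsupp.single u 1) as) / fmass α₂) := by
        have hterm : ∀ u, bW B (α₂ + Finsupp.single u 1) as
            ≤ (l1/L) * bW Cx (α₂ + Finsupp.single u 1) as
              + (l2/L) * bW Cy (α₂ + Finsupp.single u 1) as := by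
          intro u
          exact IH α (α₂ + Finsupp.single u 1) x y l1 l2 hα h1 h2 hL
            (apply_add_single_nonneg hα₂ zero_le_one u)
            (by rw [fmass_upd]; linarith)
        have hsum : (α₂.sum fun u w => w * bW B (α₂ + Finsupp.single u 1) as)
            ≤ (l1/L) * (α₂.sum fun u w => w * bW Cx (α₂ + Finsupp.single u 1) as)
              + (l2/L) * (α₂.sum fun u w => w * bW Cy (α₂ + Finsupp.single u 1) as) := by
          calc (α₂.sum fun u w => w * bW B (α₂ + Finsupp.single u 1) as)
              ≤ α₂.sum (fun u w => w * ((l1/L) * bW Cx (α₂ + Finsupp.single u 1) as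
                  + (l2/L) * bW Cy (α₂ + Finsupp.single u 1) as)) :=
                sumg_le α₂ hα₂ _ _ (fun u _ => hterm u)
            _ = _ := sumg_linear α₂ _ _ _ _
        calc a * fmean α₂ + (α₂.sum fun u w => w * bW B (α₂ + Finsupp.single u 1) as) / fmass α₂
            ≤ a * fmean α₂ + ((l1/L) * (α₂.sum fun u w => w * bW Cx (α₂ + Finsupp.single u 1) as)
                + (l2/L) * (α₂.sum fun u w => w * bW Cy (α₂ + Finsupp.single u 1) as)) / fmass α₂ := by
              gcongr
          _ = _ := by field_simp; ring
      -- combine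
      rw [bW, bW, bW]
      have hl1L : 0 ≤ l1 / L := div_nonneg h1 (le_of_lt hL)
      have hl2L : 0 ≤ l2 / L := div_nonneg h2 (le_of_lt hL)
      apply max_le
      · exact le_trans hV1 (add_le_add
          (mul_le_mul_of_nonneg_left (le_max_left _ _) hl1L)
          (mul_le_mul_of_nonneg_left (le_max_left _ _) hl2L))
      · exact le_trans hV2 (add_le_add
          (mul_le_mul_of_nonneg_left (le_max_right _ _) hl1L)
          (mul_le_mul_of_nonneg_left (le_max_right _ _) hl2L))

lemma sum_affine (ν : ℝ →₀ ℝ) (c d : ℝ) (f : ℝ → ℝ) :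
    ν.sum (fun i w => w * (c + d * f i)) = fmass ν * c + d * ν.sum (fun i w => w * f i) := by
  unfold fmass Finsupp.sum
  rw [Finset.mul_sum, Finset.sum_mul, ← Finset.sum_add_distrib]
  exact Finset.sum_congr rfl fun z _ => by ring

lemma sum_scal (ν : ℝ →₀ ℝ) (c : ℝ) (f : ℝ → ℝ) :
    ν.sum (fun i w => w * (c * f i)) = c * ν.sum (fun i w => w * f i) := by
  unfold Finsupp.sum
  rw [Finset.mul_sum]
  exact Finset.sum_congr rfl fun z _ => by ring

lemma sum_split (ν : ℝ →₀ ℝ) (f g : ℝ → ℝ) :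
    ν.sum (fun i w => w * (f i + g i))
      = ν.sum (fun i w => w * f i) + ν.sum (fun i w => w * g i) := by
  unfold Finsupp.sum
  rw [← Finset.sum_add_distrib]
  exact Finset.sum_congr rfl fun z _ => by ring

/-- Spreading lemma: a unit of mass spread as ν is worse than a mixture of unit atoms. -/
lemma bW_spread (A : List ℝ) : ∀ (α ν α₂ : ℝ →₀ ℝ),
    (∀ z, 0 ≤ α z) → (∀ z, 0 ≤ ν z) → fmass ν = 1 →
    (∀ z, 0 ≤ α₂ z) → 0 < fmass α₂ →
    bW (α + ν) α₂ A ≤ ν.sum (fun i w => w * bW (α + Finsupp.single i 1) α₂ A) := by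
  induction A with
  | nil =>
      intro α ν α₂ hα hν hν1 hα₂ hm₂
      rw [bW]
      simp [bW, Finsupp.sum]
  | cons a as IH =>
      intro α ν α₂ hα hν hν1 hα₂ hm₂
      set B := α + ν with hBdef
      have hM := fmass_nonneg α hα
      set M := fmass α with hMdef
      have hmB : fmass B = M + 1 := by rw [hBdef, fmass_add, hν1]
      have hM1 : (0:ℝ) < M + 1 := by linarith
      have hαs : ∀ i : ℝ, ∀ u : ℝ, 0 ≤ (α + Finsupp.single i (1:ℝ)) u :=
        fun i => apply_add_single_nonneg hα zero_le_one i
      have hms : ∀ i : ℝ, fmass (α + Finsupp.single i 1) = M + 1 := by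
        intro i; rw [fmass_add, fmass_single]
      -- abbreviations
      set G : ℝ → ℝ := fun z => bW (B + Finsupp.single z 1) α₂ as with hG
      set X : ℝ → ℝ → ℝ :=
        fun z i => bW ((α + Finsupp.single i 1) + Finsupp.single z 1) α₂ as with hX
      set SG : ℝ → ℝ := fun i => α.sum (fun z w => w * X z i) with hSG
      set D : ℝ → ℝ := fun i => bW (α + Finsupp.single i 2) α₂ as with hD
      set SD : ℝ := ν.sum (fun i w => w * D i) with hSD
      -- IH instances
      have hIH : ∀ z : ℝ, bW ((α + Finsupp.single z 1) + ν) α₂ as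
          ≤ ν.sum (fun i w => w * X z i) := by
        intro z
        have h0 := IH (α + Finsupp.single z 1) ν α₂ (hαs z) hν hν1 hα₂ hm₂
        refine le_trans h0 (le_of_eq (Finsupp.sum_congr fun i _ => ?_))
        rw [hX, add_right_comm]
      have hGz : ∀ z : ℝ, G z ≤ ν.sum (fun i w => w * X z i) := by
        intro z
        have e : B + Finsupp.single z 1 = (α + Finsupp.single z 1) + ν := by
          rw [hBdef]; abel
        rw [hG]; simp only []; rw [e]; exact hIH z
      -- two-point merge for the diagonal part
      have hpc : ∀ j i : ℝ, X j i ≤ (1/2) * D j + (1/2) * D i := by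
        intro j i
        have h0 := bW_two_point as α α₂ i j 1 1 hα zero_le_one zero_le_one (by norm_num) hα₂ hm₂
        have e2 : (1:ℝ) + 1 = 2 := by norm_num
        rw [e2] at h0
        have : X j i = bW ((α + Finsupp.single i 1) + Finsupp.single j 1) α₂ as := rfl
        rw [this]
        calc bW ((α + Finsupp.single i 1) + Finsupp.single j 1) α₂ as
            ≤ 1/2 * bW (α + Finsupp.single i 2) α₂ as
              + 1/2 * bW (α + Finsupp.single j 2) α₂ as := by
              convert h0 using 2 <;> norm_num
          _ = (1/2) * D j + (1/2) * D i := by rw [hD]; ring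
      have hGj : ∀ j : ℝ, G j ≤ (1/2) * D j + (1/2) * SD := by
        intro j
        refine le_trans (hGz j) ?_
        calc ν.sum (fun i w => w * X j i)
            ≤ ν.sum (fun i w => w * ((1/2) * D j + (1/2) * D i)) :=
              sumg_le ν hν _ _ (fun i _ => hpc j i)
          _ = fmass ν * ((1/2) * D j) + (1/2) * SD := sum_affine ν _ _ _
          _ = (1/2) * D j + (1/2) * SD := by rw [hν1]; ring
      -- numerator bounds
      have hb1 : α.sum (fun z w => w * G z) ≤ ν.sum (fun i w => w * SG i) := by
        calc α.sum (fun z w => w * G z)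
            ≤ α.sum (fun z w => w * ν.sum (fun i u => u * X z i)) :=
              sumg_le α hα _ _ (fun z _ => hGz z)
          _ = ν.sum (fun i u => u * α.sum (fun z w => w * X z i)) := sumg_swap α ν X
          _ = ν.sum (fun i w => w * SG i) := rfl
      have hb2 : ν.sum (fun j w => w * G j) ≤ SD := by
        calc ν.sum (fun j w => w * G j)
            ≤ ν.sum (fun j w => w * ((1/2) * SD + (1/2) * D j)) := by
              refine sumg_le ν hν _ _ (fun j _ => ?_)
              refine le_trans (hGj j) (le_of_eq (by ring))
          _ = fmass ν * ((1/2) * SD) + (1/2) * SD := sum_affine ν _ _ _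
          _ = SD := by rw [hν1]; ring
      -- value abbreviations for the RHS components
      set V1f : ℝ → ℝ := fun i => a * fmean (α + Finsupp.single i 1) +
          ((α + Finsupp.single i 1).sum fun z w =>
            w * bW ((α + Finsupp.single i 1) + Finsupp.single z 1) α₂ as)
            / fmass (α + Finsupp.single i 1) with hV1f
      set V2f : ℝ → ℝ := fun i => a * fmean α₂ +
          (α₂.sum fun u w => w * bW (α + Finsupp.single i 1) (α₂ + Finsupp.single u 1) as)
            / fmass α₂ with hV2f
      -- rewrite V1f
      have hV1f' : ∀ i : ℝ, V1f i
          = a * ((wsum α + i)/(M+1)) + (1/(M+1)) * (SG i + D i) := by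
        intro i
        have e1 : (α + Finsupp.single i 1) + Finsupp.single i 1
            = α + Finsupp.single i 2 := by
          rw [add_assoc, ← Finsupp.single_add]; norm_num
        have e2 : ((α + Finsupp.single i 1).sum fun z w =>
            w * bW ((α + Finsupp.single i 1) + Finsupp.single z 1) α₂ as) = SG i + D i := by
          have h5 : bW ((α + Finsupp.single i 1) + Finsupp.single i 1) α₂ as = D i := by
            rw [e1]
          rw [sumg_add, sumg_single, one_mul, h5]
          all_goals rfl
        rw [hV1f]; simp only []
        rw [e2, hms i, fmean_eq, wsum_add, wsum_single, one_mul, fmass_add, fmass_single]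
        have : M + 1 ≠ 0 := ne_of_gt hM1
        field_simp
        rw [← hMdef, mul_div_assoc, div_self this, mul_one]
      -- arm 1 inequality
      have hV1 : a * fmean B + (B.sum fun z w => w * bW (B + Finsupp.single z 1) α₂ as) / fmass B
          ≤ ν.sum (fun i w => w * V1f i) := by
        have eB : (B.sum fun z w => w * bW (B + Finsupp.single z 1) α₂ as)
            = α.sum (fun z w => w * G z) + ν.sum (fun j w => w * G j) := by
          rw [hBdef, sumg_add]
        have hmix : ν.sum (fun i w => w * V1f i)
            = a * fmean B + (1/(M+1)) * (ν.sum (fun i w => w * SG i) + SD) := by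
          have step1 : ν.sum (fun i w => w * V1f i)
              = ν.sum (fun i w => w * ((a/(M+1)) * wsum α + (a/(M+1)) * i))
                + ν.sum (fun i w => w * ((1/(M+1)) * (SG i + D i))) := by
            rw [← sum_split]
            refine Finsupp.sum_congr fun i _ => ?_
            rw [hV1f' i]
            have hne : M + 1 ≠ 0 := ne_of_gt hM1
            have key : a * ((wsum α + i)/(M+1)) = (a/(M+1)) * wsum α + (a/(M+1)) * i := by
              field_simp
              try ring
            rw [key]
            all_goals ring
          have step2 : ν.sum (fun i w => w * ((a/(M+1)) * wsum α + (a/(M+1)) * i))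
              = a * fmean B := by
            have : (fun i (w:ℝ) => w * ((a/(M+1)) * wsum α + (a/(M+1)) * i))
                = fun i w => w * ((a/(M+1)) * wsum α + (a/(M+1)) * id i) := rfl
            rw [this, sum_affine, hν1]
            have e3 : ν.sum (fun i w => w * id i) = wsum ν := rfl
            rw [e3, fmean_eq, hmB]
            have e4 : wsum B = wsum α + wsum ν := by rw [hBdef, wsum_add]
            rw [e4]
            have : M + 1 ≠ 0 := ne_of_gt hM1
            field_simp
            try ring
          have step3 : ν.sum (fun i w => w * ((1/(M+1)) * (SG i + D i)))
              = (1/(M+1)) * (ν.sum (fun i w => w * SG i) + SD) := by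
            rw [sum_scal]
            have : ν.sum (fun i w => w * (SG i + D i))
                = ν.sum (fun i w => w * SG i) + SD := by
              rw [sum_split]
              all_goals rfl
            rw [this]
          rw [step1, step2, step3]
        rw [hmix, eB, hmB]
        have hnum : α.sum (fun z w => w * G z) + ν.sum (fun j w => w * G j)
            ≤ ν.sum (fun i w => w * SG i) + SD := add_le_add hb1 hb2
        have : (α.sum (fun z w => w * G z) + ν.sum (fun j w => w * G j)) / (M+1)
            ≤ (1/(M+1)) * (ν.sum (fun i w => w * SG i) + SD) := by
          rw [one_div, inv_mul_eq_div]
          exact div_le_div_of_nonneg_right hnum hM1.le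
        linarith
      -- arm 2 inequality
      have hV2 : a * fmean α₂ + (α₂.sum fun u w => w * bW B (α₂ + Finsupp.single u 1) as) / fmass α₂
          ≤ ν.sum (fun i w => w * V2f i) := by
        set S2 : ℝ → ℝ := fun i =>
          α₂.sum (fun u w => w * bW (α + Finsupp.single i 1) (α₂ + Finsupp.single u 1) as) with hS2
        have hterm : ∀ u : ℝ, bW B (α₂ + Finsupp.single u 1) as
            ≤ ν.sum (fun i w => w * bW (α + Finsupp.single i 1) (α₂ + Finsupp.single u 1) as) := by
          intro u
          exact IH α ν (α₂ + Finsupp.single u 1) hα hν hν1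
            (apply_add_single_nonneg hα₂ zero_le_one u) (by rw [fmass_upd]; linarith)
        have hsum : (α₂.sum fun u w => w * bW B (α₂ + Finsupp.single u 1) as)
            ≤ ν.sum (fun i w => w * S2 i) := by
          calc (α₂.sum fun u w => w * bW B (α₂ + Finsupp.single u 1) as)
              ≤ α₂.sum (fun u w => w * ν.sum (fun i w' =>
                  w' * bW (α + Finsupp.single i 1) (α₂ + Finsupp.single u 1) as)) :=
                sumg_le α₂ hα₂ _ _ (fun u _ => hterm u)
            _ = ν.sum (fun i w => w * S2 i) :=
                sumg_swap α₂ ν (fun u i => bW (α + Finsupp.single i 1) (α₂ + Finsupp.single u 1) as)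
        have hmix : ν.sum (fun i w => w * V2f i)
            = a * fmean α₂ + (1/fmass α₂) * ν.sum (fun i w => w * S2 i) := by
          have step1 : ν.sum (fun i w => w * V2f i)
              = ν.sum (fun i w => w * ((a * fmean α₂) + (1/fmass α₂) * S2 i)) := by
            refine Finsupp.sum_congr fun i _ => ?_
            rw [hV2f]; simp only []
            have : fmass α₂ ≠ 0 := ne_of_gt hm₂
            rw [one_div, inv_mul_eq_div]
          rw [step1, sum_affine, hν1, one_mul]
        rw [hmix]
        have : (α₂.sum fun u w => w * bW B (α₂ + Finsupp.single u 1) as) / fmass α₂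
            ≤ (1/fmass α₂) * ν.sum (fun i w => w * S2 i) := by
          rw [one_div, inv_mul_eq_div]
          exact div_le_div_of_nonneg_right hsum hm₂.le
        linarith
      -- combine
      rw [bW]
      have hRHS : ν.sum (fun i w => w * bW (α + Finsupp.single i 1) α₂ (a :: as))
          = ν.sum (fun i w => w * max (V1f i) (V2f i)) := by
        refine Finsupp.sum_congr fun i _ => ?_
        rw [bW]
        all_goals rfl
      rw [hRHS]
      apply max_le
      · refine le_trans hV1 (sumg_le ν hν _ _ (fun i _ => le_max_left _ _))
      · refine le_trans hV2 (sumg_le ν hν _ _ (fun i _ => le_max_right _ _))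

/-- Scaling lemma: increasing the total prior mass (same shape) decreases the value. -/
lemma bW_scale (A : List ℝ) : ∀ (α α₂ : ℝ →₀ ℝ) (c : ℝ),
    (∀ z, 0 ≤ α z) → 0 < fmass α → 1 ≤ c →
    (∀ z, 0 ≤ α₂ z) → 0 < fmass α₂ →
    bW (c • α) α₂ A ≤ bW α α₂ A := by
  induction A with
  | nil => intro α α₂ c hα hM hc hα₂ hm₂; rw [bW, bW]
  | cons a as IH =>
      intro α α₂ c hα hM hc hα₂ hm₂
      set M := fmass α with hMdef
      have hc0 : (0:ℝ) < c := lt_of_lt_of_le one_pos hc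
      have hM1 : (0:ℝ) < M + 1 := by linarith
      have hcM1 : (0:ℝ) < c * M + 1 := by nlinarith
      set ρ : ℝ := (M+1)/(c*M+1) with hρdef
      have hρ0 : 0 ≤ ρ := le_of_lt (div_pos hM1 hcM1)
      have hρ1 : ρ ≤ 1 := by
        rw [hρdef, div_le_one hcM1]; nlinarith
      have hr0 : 0 ≤ (1-ρ)/M := div_nonneg (by linarith) hM.le
      set T : ℝ := α.sum (fun u w => w * bW (α + Finsupp.single u 1) α₂ as) with hT
      set Gc : ℝ → ℝ := fun z => bW (c • α + Finsupp.single z 1) α₂ as with hGc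
      -- pointwise bound on updated states
      have hpoint : ∀ z : ℝ, Gc z ≤ ρ * bW (α + Finsupp.single z 1) α₂ as + ((1-ρ)/M) * T := by
        intro z
        set c₂ : ℝ := (c*M+1)/(M+1) with hc₂def
        set ν : ℝ →₀ ℝ := Finsupp.single z ρ + ((1-ρ)/M) • α with hνdef
        have hν : ∀ u : ℝ, 0 ≤ ν u := by
          intro u
          rw [hνdef, Finsupp.add_apply, Finsupp.smul_apply, smul_eq_mul]
          have h1 : (0:ℝ) ≤ (Finsupp.single z ρ) u := by
            rw [Finsupp.single_apply]; split <;> simp [hρ0]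
          have h2 : 0 ≤ (1-ρ)/M * α u := mul_nonneg hr0 (hα u)
          linarith
        have hνm : fmass ν = 1 := by
          rw [hνdef, fmass_add, fmass_single, fmass_smul, ← hMdef]
          have : M ≠ 0 := ne_of_gt hM
          field_simp
          ring
        have hkey : c • α + Finsupp.single z 1 = c₂ • (α + ν) := by
          rw [hνdef, smul_add, smul_add, Finsupp.smul_single, smul_eq_mul, smul_smul]
          have e1 : c₂ * ρ = 1 := by
            rw [hc₂def, hρdef]
            field_simp
          have e2 : c₂ • α + (c₂ * ((1-ρ)/M)) • α = c • α := by
            rw [← add_smul]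
            congr 1
            rw [hc₂def, hρdef]
            have h1 : M ≠ 0 := ne_of_gt hM
            have h2 : M + 1 ≠ 0 := ne_of_gt hM1
            have h3 : c * M + 1 ≠ 0 := ne_of_gt hcM1
            field_simp
            ring
          rw [e1, ← add_assoc, add_right_comm, e2]
        have hc₂1 : 1 ≤ c₂ := by
          rw [hc₂def, le_div_iff₀ hM1]; nlinarith
        have hαν : ∀ u : ℝ, 0 ≤ (α + ν) u := by
          intro u; rw [Finsupp.add_apply]; exact add_nonneg (hα u) (hν u)
        have hmαν : 0 < fmass (α + ν) := by rw [fmass_add, hνm]; linarith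
        have step1 : Gc z ≤ bW (α + ν) α₂ as := by
          rw [hGc]; simp only []; rw [hkey]
          exact IH (α + ν) α₂ c₂ hαν hmαν hc₂1 hα₂ hm₂
        have step2 : bW (α + ν) α₂ as
            ≤ ρ * bW (α + Finsupp.single z 1) α₂ as + ((1-ρ)/M) * T := by
          refine le_trans (bW_spread as α ν α₂ hα hν hνm hα₂ hm₂) (le_of_eq ?_)
          rw [hνdef, sumg_add, sumg_single, sumg_smul, hT]
        exact le_trans step1 step2
      -- arm 1
      have hsum1 : α.sum (fun z w => w * Gc z) ≤ T := by
        calc α.sum (fun z w => w * Gc z)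
            ≤ α.sum (fun z w => w * (((1-ρ)/M) * T
                + ρ * bW (α + Finsupp.single z 1) α₂ as)) := by
              refine sumg_le α hα _ _ (fun z _ => ?_)
              refine le_trans (hpoint z) (le_of_eq (by ring))
          _ = fmass α * (((1-ρ)/M) * T) + ρ * T := sum_affine α _ _ _
          _ = T := by
              rw [← hMdef]
              have : M ≠ 0 := ne_of_gt hM
              field_simp
              ring
      have hV1 : a * fmean (c • α) + ((c • α).sum fun z w =>
            w * bW (c • α + Finsupp.single z 1) α₂ as) / fmass (c • α)
          ≤ a * fmean α + (α.sum fun z w =>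
            w * bW (α + Finsupp.single z 1) α₂ as) / fmass α := by
        have e1 : fmean (c • α) = fmean α := by
          rw [fmean_eq, fmean_eq, wsum_smul, fmass_smul, ← hMdef]
          have h1 : M ≠ 0 := ne_of_gt hM
          have h2 : c ≠ 0 := ne_of_gt hc0
          field_simp
        have e2 : ((c • α).sum fun z w => w * bW (c • α + Finsupp.single z 1) α₂ as)
            = c * α.sum (fun z w => w * Gc z) := sumg_smul c α Gc
        rw [e1, e2, fmass_smul, ← hMdef]
        have e3 : c * α.sum (fun z w => w * Gc z) / (c * M)
            = α.sum (fun z w => w * Gc z) / M := by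
          rw [mul_div_mul_left _ _ (ne_of_gt hc0)]
        rw [e3]
        have : α.sum (fun z w => w * Gc z) / M ≤ T / M :=
          div_le_div_of_nonneg_right hsum1 hM.le
        rw [hT] at this
        linarith
      -- arm 2
      have hV2 : a * fmean α₂ + (α₂.sum fun u w =>
            w * bW (c • α) (α₂ + Finsupp.single u 1) as) / fmass α₂
          ≤ a * fmean α₂ + (α₂.sum fun u w =>
            w * bW α (α₂ + Finsupp.single u 1) as) / fmass α₂ := by
        have hsum2 : (α₂.sum fun u w => w * bW (c • α) (α₂ + Finsupp.single u 1) as)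
            ≤ α₂.sum fun u w => w * bW α (α₂ + Finsupp.single u 1) as := by
          refine sumg_le α₂ hα₂ _ _ (fun u _ => ?_)
          exact IH α (α₂ + Finsupp.single u 1) c hα hM hc
            (apply_add_single_nonneg hα₂ zero_le_one u) (by rw [fmass_upd]; linarith)
        have := div_le_div_of_nonneg_right hsum2 hm₂.le
        linarith
      rw [bW, bW]
      exact max_le_max hV1 hV2


theorem bW_antitone_in_prior_weight (M M' : ℝ) (hM : 0 < M) (hMM' : M < M')
    (F α₂ : ℝ →₀ ℝ) (hF : ∀ x, 0 ≤ F x) (hF1 : fmass F = 1)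
    (hα₂ : ∀ x, 0 ≤ α₂ x) (hα₂m : 0 < fmass α₂)
    (A : List ℝ) (hA : ∀ a ∈ A, 0 ≤ a) :
    bW (M' • F) α₂ A ≤ bW (M • F) α₂ A := by
  have hMne : M ≠ 0 := ne_of_gt hM
  have e : M' • F = (M'/M) • (M • F) := by
    rw [smul_smul, div_mul_cancel₀ _ hMne]
  rw [e]
  refine bW_scale A (M • F) α₂ (M'/M) ?_ ?_ ?_ hα₂ hα₂m
  · intro z; rw [Finsupp.smul_apply, smul_eq_mul]; exact mul_nonneg hM.le (hF z)
  · rw [fmass_smul, hF1, mul_one]; exact hM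
  · rw [le_div_iff₀ hM]; linarith
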